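/- For coprime integers m, n, the intersection K_{m,n} ∩ K_{2,−2} inside T² = U(1)×U(1) is a cyclic group of order 2|m+n|, provided m + n ≠ 0. -/

import Mathlib

noncomputable section

open scoped ComplexConjugate

/-- The character `(z, w) ↦ zᵐ wⁿ` of the torus `T² = U(1) × U(1)`. -/
def torusChar (m n : ℤ) : Circle × Circle →* Circle where
  toFun p := p.1 ^ m * p.2 ^ n
  map_one' := by simp
  map_mul' a b := by
    simp only [Prod.fst_mul, Prod.snd_mul, mul_zpow]
    exact mul_mul_mul_comm _ _ _ _

/-- The subgroup `K_{m,n} = {(e^{iθ₁}, e^{iθ₂}) ∈ T² : e^{i(mθ₁+nθ₂)} = 1}` of the maximal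
torus `T²` of `SU(2) × SU(2)`. -/
def Kmn (m n : ℤ) : Subgroup (Circle × Circle) := (torusChar m n).ker

/-!
Choose Bézout coefficients `a * m + b * n = 1`. In any commutative group `G`, the map
`u ↦ (uⁿ, u⁻ᵐ)` is an isomorphism of `G` onto the kernel of `(z, w) ↦ zᵐ wⁿ`, with inverse
`(z, w) ↦ zᵇ w⁻ᵃ`. Along it the character `(z, w) ↦ zᵖ w^q` pulls back to `u ↦ u ^ (n p - m q)`,
so `K_{m,n} ∩ K_{p,q}` is isomorphic to the group of `|n p - m q|`-th roots of unity in `U(1)`.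
For `(p, q) = (2, -2)` the exponent is `2 (m + n)`.
-/

lemma torusChar_eq_coprod (m n : ℤ) : torusChar m n = (zpowGroupHom m).coprod (zpowGroupHom n) :=
  rfl

section CommGroup

variable {G : Type*} [CommGroup G]

lemma coprod_zpowGroupHom_comp_prod (p q r s : ℤ) :
    ((zpowGroupHom p).coprod (zpowGroupHom q)).comp
        ((zpowGroupHom r).prod (zpowGroupHom s) : G →* G × G) =
      zpowGroupHom (r * p + s * q) := by
  ext u
  simp [zpow_add, zpow_mul]

lemma prod_zpowGroupHom_injective {m n : ℤ} (h : IsCoprime m n) :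
    Function.Injective ((zpowGroupHom n).prod (zpowGroupHom (-m)) : G →* G × G) := by
  obtain ⟨a, b, hab⟩ := h
  refine Function.LeftInverse.injective (g := (zpowGroupHom b).coprod (zpowGroupHom (-a))) ?_
  intro u
  rw [← MonoidHom.comp_apply, coprod_zpowGroupHom_comp_prod, show n * b + -m * -a = 1 by linarith]
  simp

lemma zpow_mul_zpow_zpow_eq_of_mul_add_mul_eq_one {x y : G} {a b m n : ℤ}
    (hab : a * m + b * n = 1) (hxy : x ^ m * y ^ n = 1) : (x ^ b * y ^ (-a)) ^ n = x := by
  have hy : y ^ n = (x ^ m)⁻¹ := eq_inv_of_mul_eq_one_right hxy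
  calc (x ^ b * y ^ (-a)) ^ n = x ^ (b * n) * (y ^ n) ^ (-a) := by
        rw [mul_zpow, ← zpow_mul, ← zpow_mul, ← zpow_mul, mul_comm (-a) n]
    _ = x ^ (a * m + b * n) := by
        rw [hy, inv_zpow', neg_neg, ← zpow_mul, zpow_add, mul_comm, mul_comm m a]
    _ = x := by rw [hab, zpow_one]

lemma ker_coprod_zpowGroupHom_eq_range {m n : ℤ} (h : IsCoprime m n) :
    ((zpowGroupHom m).coprod (zpowGroupHom n) : G × G →* G).ker =
      ((zpowGroupHom n).prod (zpowGroupHom (-m))).range := by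
  obtain ⟨a, b, hab⟩ := h
  refine le_antisymm ?_ ?_
  · intro x (hx : x.1 ^ m * x.2 ^ n = 1)
    refine ⟨x.1 ^ b * x.2 ^ (-a), Prod.ext (zpow_mul_zpow_zpow_eq_of_mul_add_mul_eq_one hab hx) ?_⟩
    calc (x.1 ^ b * x.2 ^ (-a)) ^ (-m) = (x.2 ^ a * x.1 ^ (-b)) ^ m := by
          rw [zpow_neg, ← inv_zpow, mul_inv, ← zpow_neg, ← zpow_neg, neg_neg, mul_comm]
      _ = x.2 := zpow_mul_zpow_zpow_eq_of_mul_add_mul_eq_one (by linarith) (by rwa [mul_comm])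
  · rintro _ ⟨u, rfl⟩
    rw [MonoidHom.mem_ker, ← MonoidHom.comp_apply, coprod_zpowGroupHom_comp_prod,
      show n * m + -m * n = 0 by ring]
    simp

def zpowGroupHomKerEquivRootsOfUnity (k : ℤ) :
    (zpowGroupHom k : G →* G).ker ≃* rootsOfUnity k.natAbs G :=
  ((toUnits : G ≃* Gˣ).subgroupMap _).trans (MulEquiv.subgroupCongr (by
    ext u
    simp only [Subgroup.mem_map, MonoidHom.mem_ker, zpowGroupHom_apply, mem_rootsOfUnity,
      pow_natAbs_eq_one]
    constructor
    · rintro ⟨x, hx, rfl⟩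
      rw [← map_zpow, hx, map_one]
    · intro hu
      exact ⟨u, by rw [← Units.val_zpow_eq_zpow_val, hu, Units.val_one], toUnits_val_apply u⟩))

end CommGroup

lemma Kmn_inf_Kmn_eq_map {m n : ℤ} (h : IsCoprime m n) (p q : ℤ) :
    Kmn m n ⊓ Kmn p q =
      (zpowGroupHom (n * p - m * q)).ker.map ((zpowGroupHom n).prod (zpowGroupHom (-m))) := by
  rw [Kmn, torusChar_eq_coprod, ker_coprod_zpowGroupHom_eq_range h, ← Subgroup.map_comap_eq, Kmn,
    torusChar_eq_coprod, MonoidHom.comap_ker, coprod_zpowGroupHom_comp_prod, neg_mul,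
    ← sub_eq_add_neg]

def kmnInfKmnEquivRootsOfUnity {m n : ℤ} (h : IsCoprime m n) (p q : ℤ) :
    ↥(Kmn m n ⊓ Kmn p q) ≃* rootsOfUnity (n * p - m * q).natAbs Circle :=
  (MulEquiv.subgroupCongr (Kmn_inf_Kmn_eq_map h p q)).trans
    ((Subgroup.equivMapOfInjective _ _ (prod_zpowGroupHom_injective h)).symm.trans
      (zpowGroupHomKerEquivRootsOfUnity _))

/-- For coprime integers `m, n` with `m + n ≠ 0`, the intersection `K_{m,n} ∩ K_{2,−2}`
inside `T² = U(1) × U(1)` is a cyclic group of order `2|m+n|`. -/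
theorem Kmn_inter_K2neg2_cyclic (m n : ℤ) (hco : IsCoprime m n) (hsum : m + n ≠ 0) :
    IsCyclic ↥(Kmn m n ⊓ Kmn 2 (-2)) ∧
      Nat.card ↥(Kmn m n ⊓ Kmn 2 (-2)) = 2 * (m + n).natAbs := by
  have hdet : (n * 2 - m * -2).natAbs = 2 * (m + n).natAbs := by
    rw [show n * 2 - m * -2 = 2 * (m + n) by ring, Int.natAbs_mul]
    rfl
  have : NeZero (2 * (m + n).natAbs) := ⟨by simpa using hsum⟩
  obtain ⟨e⟩ : Nonempty (↥(Kmn m n ⊓ Kmn 2 (-2)) ≃* rootsOfUnity (2 * (m + n).natAbs) Circle) :=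
    hdet ▸ ⟨kmnInfKmnEquivRootsOfUnity hco 2 (-2)⟩
  exact ⟨e.isCyclic.mpr inferInstance,
    (Nat.card_congr e.toEquiv).trans (HasEnoughRootsOfUnity.natCard_rootsOfUnity _ _)⟩
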